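/- Let n = 7 and define s : ZMod 128 → H by s(a) = i^⌊a.val²/64⌋ · j^⌊2·a.val²/64⌋. Then for every τ ∈ ZMod 128 with τ ≠ 0 and τ.val ≢ 8 (mod 16), the periodic autocorrelation θ_s(τ) = Σ_{a ∈ ZMod 128} s(a)·(s(a+τ))* equals 0 (i.e. the sequence has zero autocorrelation at all off-peak shifts except those congruent to 8 modulo 16). -/

import Mathlib

/-!
Every `s a` is one of `±1, ±i, ±j, ±k`, so `s` is the coefficientwise image of an `ℍ[ℤ]`-valued
sequence, and that image map is a ring hom commuting with `star`. Over `ℤ` equality is decidable, so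
the kernel can evaluate the autocorrelation at every admissible shift and find `0`.
-/

noncomputable def qi : Quaternion ℝ := ⟨0,1,0,0⟩
noncomputable def qj : Quaternion ℝ := ⟨0,0,1,0⟩
noncomputable def qk : Quaternion ℝ := ⟨0,0,0,1⟩

namespace Quaternion

variable {R S : Type*} [CommRing R] [CommRing S]

def mapRingHom (f : R →+* S) : ℍ[R] →+* ℍ[S] where
  toFun q := ⟨f q.re, f q.imI, f q.imJ, f q.imK⟩
  map_one' := by ext <;> simp
  -- `erw`: the factors are `QuaternionAlgebra.mk`s, but their product is taken in `ℍ[S]`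
  map_mul' p q := by ext <;> simp <;> erw [QuaternionAlgebra.mk_mul_mk] <;> simp <;> ring
  map_zero' := by ext <;> simp
  map_add' p q := by ext <;> simp <;> rfl

@[simp] lemma re_mapRingHom (f : R →+* S) (q : ℍ[R]) : (mapRingHom f q).re = f q.re := rfl
@[simp] lemma imI_mapRingHom (f : R →+* S) (q : ℍ[R]) : (mapRingHom f q).imI = f q.imI := rfl
@[simp] lemma imJ_mapRingHom (f : R →+* S) (q : ℍ[R]) : (mapRingHom f q).imJ = f q.imJ := rfl
@[simp] lemma imK_mapRingHom (f : R →+* S) (q : ℍ[R]) : (mapRingHom f q).imK = f q.imK := rfl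

lemma mapRingHom_star (f : R →+* S) (q : ℍ[R]) :
    mapRingHom f (star q) = star (mapRingHom f q) := by
  ext <;> simp

instance [DecidableEq R] : DecidableEq ℍ[R] :=
  (QuaternionAlgebra.equivProd (-1 : R) 0 (-1)).decidableEq

end Quaternion

def zi : Quaternion ℤ := ⟨0, 1, 0, 0⟩
def zj : Quaternion ℤ := ⟨0, 0, 1, 0⟩

lemma zi_pow_four : zi ^ 4 = 1 := by decide
lemma zj_pow_four : zj ^ 4 = 1 := by decide

lemma mapRingHom_zi : Quaternion.mapRingHom (Int.castRingHom ℝ) zi = qi := by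
  ext <;> simp [qi] <;> simp [zi]

lemma mapRingHom_zj : Quaternion.mapRingHom (Int.castRingHom ℝ) zj = qj := by
  ext <;> simp [qj] <;> simp [zj]

/-- The exponents are reduced mod 4 so that the kernel only ever computes small powers. -/
def quatSeqInt (a : ZMod 128) : Quaternion ℤ :=
  zi ^ (a.val ^ 2 / 64 % 4) * zj ^ (2 * a.val ^ 2 / 64 % 4)

lemma mapRingHom_quatSeqInt (a : ZMod 128) :
    Quaternion.mapRingHom (Int.castRingHom ℝ) (quatSeqInt a)
      = qi ^ (a.val ^ 2 / 64) * qj ^ (2 * a.val ^ 2 / 64) := by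
  rw [quatSeqInt, ← pow_eq_pow_mod _ zi_pow_four, ← pow_eq_pow_mod _ zj_pow_four, map_mul,
    map_pow, map_pow, mapRingHom_zi, mapRingHom_zj]

lemma quatSeqInt_autocorrelation_eq_zero :
    ∀ τ : ZMod 128, τ ≠ 0 → τ.val % 16 ≠ 8 →
      ∑ a : ZMod 128, quatSeqInt a * star (quatSeqInt (a + τ)) = 0 := by
  decide +kernel

theorem quatseq_length128_zcz (s : ZMod 128 → Quaternion ℝ)
    (hs : ∀ a : ZMod 128, s a = qi ^ (a.val ^ 2 / 64) * qj ^ (2 * a.val ^ 2 / 64))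
    (τ : ZMod 128) (hτ : τ ≠ 0) (hτ' : τ.val % 16 ≠ 8) :
    ∑ a : ZMod 128, s a * star (s (a + τ)) = 0 := by
  obtain rfl : s = fun a => Quaternion.mapRingHom (Int.castRingHom ℝ) (quatSeqInt a) :=
    funext fun a => (hs a).trans (mapRingHom_quatSeqInt a).symm
  simp only [← Quaternion.mapRingHom_star, ← map_mul, ← map_sum,
    quatSeqInt_autocorrelation_eq_zero τ hτ hτ', map_zero]
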